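/- arXiv:1010.2155 — 3 statements merged into one kernel-verified Lean document; each statement's English description precedes it below -/
import Mathlib

section
/- Let μ be a nonnegative measure on ℝ^d. Then ∫_0^T ∫_{ℝ^d} |𝓕Γ(t)(ξ)|² μ(dξ) dt < ∞ if and only if ∫_{ℝ^d} (1 + ‖ξ‖²)^{-1} μ(dξ) < ∞, where |𝓕Γ(t)(ξ)|² = exp(-2t‖ξ‖²) and T > 0 is fixed. -/
open MeasureTheory Real Set intervalIntegral
open scoped ENNReal

private lemma dalang_time_int_val {T x : ℝ} (hT : 0 < T) (hx : 0 < x) :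
    ∫ t in (0:ℝ)..T, Real.exp (-2 * t * x) = (1 - Real.exp (-2 * T * x)) / (2 * x) := by
  have h1 : ∀ t : ℝ, -2 * t * x = (-2 * x) * t := fun t => by ring
  simp_rw [h1]
  have hc : (-2 * x) ≠ 0 := by nlinarith
  have h2 := mul_integral_comp_mul_left (a := (0:ℝ)) (b := T)
    (f := Real.exp) (c := -2 * x)
  rw [integral_exp] at h2
  have h3 : (-2 * x) * T = -2 * T * x := by ring
  have h4 : (-2 * x) * 0 = 0 := by ring
  rw [h3, h4, Real.exp_zero] at h2
  have h6 : (1 - Real.exp (-2*x*T))/(2*x) = (Real.exp (-2*T*x) - 1)/(-2*x) := by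
    rw [div_eq_div_iff (by linarith) hc, show -2*x*T = -2*T*x by ring]
    ring
  rw [h6, eq_div_iff hc]
  linear_combination h2

private lemma dalang_time_lint {T x : ℝ} (hT : 0 < T) (hx : 0 < x) :
    ∫⁻ t in Set.Ioc (0 : ℝ) T, ENNReal.ofReal (Real.exp (-2 * t * x)) =
      ENNReal.ofReal ((1 - Real.exp (-2 * T * x)) / (2 * x)) := by
  have hint : IntegrableOn (fun t => Real.exp (-2 * t * x)) (Set.Ioc (0:ℝ) T) volume :=
    Continuous.integrableOn_Ioc (by fun_prop)
  rw [← ofReal_integral_eq_lintegral_ofReal hint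
    (Filter.Eventually.of_forall fun t => (Real.exp_pos _).le),
    ← integral_of_le hT.le, dalang_time_int_val hT hx]

private lemma dalang_upper {T x : ℝ} (hT : 0 < T) (hx : 0 ≤ x) :
    ∫⁻ t in Set.Ioc (0 : ℝ) T, ENNReal.ofReal (Real.exp (-2 * t * x)) ≤
      ENNReal.ofReal (T + 2⁻¹) * ENNReal.ofReal ((1 + x)⁻¹) := by
  rw [← ENNReal.ofReal_mul (by linarith)]
  rcases eq_or_lt_of_le hx with h0 | h0
  · subst h0
    simp only [mul_zero, Real.exp_zero, add_zero, inv_one, mul_one]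
    rw [setLIntegral_const, Real.volume_Ioc, sub_zero, ENNReal.ofReal_one, one_mul]
    exact ENNReal.ofReal_le_ofReal (by linarith)
  · rw [dalang_time_lint hT h0]
    apply ENNReal.ofReal_le_ofReal
    have he1 : 1 - Real.exp (-2 * T * x) ≤ 2 * T * x := by
      nlinarith [Real.add_one_le_exp (-2 * T * x)]
    have he2 : 1 - Real.exp (-2 * T * x) ≤ 1 := by
      nlinarith [Real.exp_pos (-2 * T * x)]
    rw [show (T + 2⁻¹) * (1 + x)⁻¹ = (T + 2⁻¹) / (1 + x) by rw [div_eq_mul_inv],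
      div_le_div_iff₀ (by linarith) (by linarith)]
    nlinarith

private lemma dalang_lower {T x : ℝ} (hT : 0 < T) (hx : 0 ≤ x) :
    ENNReal.ofReal (Real.exp (-2) * min T 1) * ENNReal.ofReal ((1 + x)⁻¹) ≤
      ∫⁻ t in Set.Ioc (0 : ℝ) T, ENNReal.ofReal (Real.exp (-2 * t * x)) := by
  set s : ℝ := min T (1 + x)⁻¹ with hs
  have hx1 : (0:ℝ) < 1 + x := by linarith
  have hspos : 0 < s := lt_min hT (by positivity)
  have hsT : s ≤ T := min_le_left _ _
  have hsx : s * x ≤ 1 := by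
    calc s * x ≤ (1 + x)⁻¹ * x := by
          apply mul_le_mul_of_nonneg_right (min_le_right _ _) hx
      _ ≤ 1 := by rw [inv_mul_le_iff₀ hx1]; linarith
  have step1 : ENNReal.ofReal (Real.exp (-2 * s * x)) * ENNReal.ofReal s ≤
      ∫⁻ t in Set.Ioc (0 : ℝ) T, ENNReal.ofReal (Real.exp (-2 * t * x)) := by
    calc ENNReal.ofReal (Real.exp (-2 * s * x)) * ENNReal.ofReal s
        = ∫⁻ _ in Set.Ioc (0:ℝ) s, ENNReal.ofReal (Real.exp (-2 * s * x)) := by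
          rw [setLIntegral_const, Real.volume_Ioc, sub_zero]
      _ ≤ ∫⁻ t in Set.Ioc (0:ℝ) s, ENNReal.ofReal (Real.exp (-2 * t * x)) := by
          apply setLIntegral_mono (by fun_prop)
          intro t ht
          apply ENNReal.ofReal_le_ofReal
          apply Real.exp_le_exp.mpr
          nlinarith [ht.2, hx]
      _ ≤ _ := lintegral_mono' (Measure.restrict_mono (Set.Ioc_subset_Ioc_right hsT) le_rfl)
          le_rfl
  refine le_trans ?_ step1
  rw [← ENNReal.ofReal_mul (by positivity), ← ENNReal.ofReal_mul (by positivity)]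
  apply ENNReal.ofReal_le_ofReal
  have hexp : Real.exp (-2) ≤ Real.exp (-2 * s * x) := by
    apply Real.exp_le_exp.mpr; nlinarith
  have hi1 : (1 + x)⁻¹ ≤ 1 := by
    rw [inv_le_one_iff₀]; right; linarith
  have hsge : min T 1 * (1 + x)⁻¹ ≤ s := by
    apply le_min
    · calc min T 1 * (1 + x)⁻¹ ≤ T * 1 :=
          mul_le_mul (min_le_left _ _) hi1 (by positivity) hT.le
        _ = T := mul_one T
    · exact mul_le_of_le_one_left (by positivity) (min_le_right _ _)
  calc Real.exp (-2) * min T 1 * (1 + x)⁻¹ ≤ Real.exp (-2) * s := by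
        rw [mul_assoc]; exact mul_le_mul_of_nonneg_left hsge (Real.exp_pos _).le
    _ ≤ Real.exp (-2 * s * x) * s := mul_le_mul_of_nonneg_right hexp hspos.le

/-- Dalang's condition: ∫₀ᵀ ∫ exp(-2t‖ξ‖²) μ(dξ) dt < ∞ iff ∫ (1+‖ξ‖²)⁻¹ μ(dξ) < ∞. -/
theorem dalang_condition_iff (d : ℕ) (T : ℝ) (hT : 0 < T)
    (μ : Measure (EuclideanSpace ℝ (Fin d))) :
    (∫⁻ t in Set.Ioc (0 : ℝ) T,
        ∫⁻ ξ, ENNReal.ofReal (Real.exp (-2 * t * ‖ξ‖ ^ 2)) ∂μ) < ⊤ ↔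
      (∫⁻ ξ, ENNReal.ofReal ((1 + ‖ξ‖ ^ 2)⁻¹) ∂μ) < ⊤ := by
  have hmeasg : Measurable fun ξ : EuclideanSpace ℝ (Fin d) =>
      ENNReal.ofReal ((1 + ‖ξ‖ ^ 2)⁻¹) := by fun_prop
  by_cases hfin : ∀ n : ℕ, μ (Metric.closedBall (0 : EuclideanSpace ℝ (Fin d)) n) < ⊤
  · -- μ is σ-finite
    haveI : SigmaFinite μ := by
      refine ⟨⟨⟨fun n => Metric.closedBall 0 n, fun _ => trivial, fun n => hfin n, ?_⟩⟩⟩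
      exact Metric.iUnion_closedBall_nat _
    have hmeas : AEMeasurable
        (Function.uncurry fun (t : ℝ) (ξ : EuclideanSpace ℝ (Fin d)) =>
          ENNReal.ofReal (Real.exp (-2 * t * ‖ξ‖ ^ 2)))
        ((volume.restrict (Set.Ioc (0 : ℝ) T)).prod μ) := by
      apply Measurable.aemeasurable
      apply Measurable.ennreal_ofReal
      fun_prop
    have hswap := lintegral_lintegral_swap (μ := volume.restrict (Set.Ioc (0:ℝ) T)) (ν := μ) hmeas
    rw [hswap]
    constructor
    · intro h
      have key : ENNReal.ofReal (Real.exp (-2) * min T 1) *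
          ∫⁻ ξ, ENNReal.ofReal ((1 + ‖ξ‖ ^ 2)⁻¹) ∂μ ≤
          ∫⁻ ξ, (∫⁻ t in Set.Ioc (0 : ℝ) T,
            ENNReal.ofReal (Real.exp (-2 * t * ‖ξ‖ ^ 2))) ∂μ := by
        rw [← lintegral_const_mul _ hmeasg]
        exact lintegral_mono fun ξ => dalang_lower hT (by positivity)
      have hlt := lt_of_le_of_lt key h
      rw [ENNReal.mul_lt_top_iff] at hlt
      rcases hlt with ⟨_, h2⟩ | h2 | h2
      · exact h2
      · exfalso
        rw [ENNReal.ofReal_eq_zero] at h2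
        have : 0 < Real.exp (-2) * min T 1 := by positivity
        linarith
      · simp [h2]
    · intro h
      calc ∫⁻ ξ, (∫⁻ t in Set.Ioc (0 : ℝ) T,
            ENNReal.ofReal (Real.exp (-2 * t * ‖ξ‖ ^ 2))) ∂μ
          ≤ ∫⁻ ξ, ENNReal.ofReal (T + 2⁻¹) * ENNReal.ofReal ((1 + ‖ξ‖ ^ 2)⁻¹) ∂μ :=
            lintegral_mono fun ξ => dalang_upper hT (by positivity)
        _ = ENNReal.ofReal (T + 2⁻¹) * ∫⁻ ξ, ENNReal.ofReal ((1 + ‖ξ‖ ^ 2)⁻¹) ∂μ :=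
            lintegral_const_mul _ hmeasg
        _ < ⊤ := ENNReal.mul_lt_top ENNReal.ofReal_lt_top h
  · -- some ball has infinite measure; both sides are ⊤
    push_neg at hfin
    obtain ⟨n, hn⟩ := hfin
    rw [top_le_iff] at hn
    have hball : ∀ ξ ∈ Metric.closedBall (0 : EuclideanSpace ℝ (Fin d)) (n : ℝ),
        ‖ξ‖ ≤ (n : ℝ) := by
      intro ξ hξ
      rwa [Metric.mem_closedBall, dist_zero_right] at hξ
    have hRHS : (∫⁻ ξ, ENNReal.ofReal ((1 + ‖ξ‖ ^ 2)⁻¹) ∂μ) = ⊤ := by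
      rw [eq_top_iff]
      calc (⊤ : ℝ≥0∞) = ENNReal.ofReal ((1 + (n : ℝ) ^ 2)⁻¹) *
            μ (Metric.closedBall 0 (n : ℝ)) := by
            rw [hn, ENNReal.mul_top]
            rw [Ne, ENNReal.ofReal_eq_zero, not_le]
            positivity
        _ = ∫⁻ _ in Metric.closedBall (0 : EuclideanSpace ℝ (Fin d)) (n : ℝ),
              ENNReal.ofReal ((1 + (n : ℝ) ^ 2)⁻¹) ∂μ := (setLIntegral_const _ _).symm
        _ ≤ ∫⁻ ξ in Metric.closedBall (0 : EuclideanSpace ℝ (Fin d)) (n : ℝ),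
              ENNReal.ofReal ((1 + ‖ξ‖ ^ 2)⁻¹) ∂μ := by
            apply setLIntegral_mono hmeasg
            intro ξ hξ
            apply ENNReal.ofReal_le_ofReal
            have h1 : ‖ξ‖ ^ 2 ≤ (n : ℝ) ^ 2 := by
              have := hball ξ hξ
              nlinarith [norm_nonneg ξ]
            apply inv_anti₀ (by positivity) (by linarith)
        _ ≤ _ := setLIntegral_le_lintegral _ _
    have hLHS : (∫⁻ t in Set.Ioc (0 : ℝ) T,
        ∫⁻ ξ, ENNReal.ofReal (Real.exp (-2 * t * ‖ξ‖ ^ 2)) ∂μ) = ⊤ := by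
      have hinner : ∀ t : ℝ,
          (∫⁻ ξ, ENNReal.ofReal (Real.exp (-2 * t * ‖ξ‖ ^ 2)) ∂μ) = ⊤ := by
        intro t
        rw [eq_top_iff]
        calc (⊤ : ℝ≥0∞) = ENNReal.ofReal (Real.exp (-2 * |t| * (n : ℝ) ^ 2)) *
              μ (Metric.closedBall 0 (n : ℝ)) := by
              rw [hn, ENNReal.mul_top]
              rw [Ne, ENNReal.ofReal_eq_zero, not_le]
              exact Real.exp_pos _
          _ = ∫⁻ _ in Metric.closedBall (0 : EuclideanSpace ℝ (Fin d)) (n : ℝ),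
                ENNReal.ofReal (Real.exp (-2 * |t| * (n : ℝ) ^ 2)) ∂μ :=
              (setLIntegral_const _ _).symm
          _ ≤ ∫⁻ ξ in Metric.closedBall (0 : EuclideanSpace ℝ (Fin d)) (n : ℝ),
                ENNReal.ofReal (Real.exp (-2 * t * ‖ξ‖ ^ 2)) ∂μ := by
              apply setLIntegral_mono (by fun_prop)
              intro ξ hξ
              apply ENNReal.ofReal_le_ofReal
              apply Real.exp_le_exp.mpr
              have h1 : ‖ξ‖ ^ 2 ≤ (n : ℝ) ^ 2 := by
                have := hball ξ hξ
                nlinarith [norm_nonneg ξ]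
              nlinarith [le_abs_self t, abs_nonneg t, sq_nonneg ‖ξ‖]
          _ ≤ _ := setLIntegral_le_lintegral _ _
      have : (∫⁻ t in Set.Ioc (0:ℝ) T,
          ∫⁻ ξ, ENNReal.ofReal (Real.exp (-2 * t * ‖ξ‖ ^ 2)) ∂μ) =
          ∫⁻ _ in Set.Ioc (0:ℝ) T, (⊤ : ℝ≥0∞) :=
        lintegral_congr fun t => hinner t
      rw [this, setLIntegral_const, Real.volume_Ioc, ENNReal.top_mul]
      rw [Ne, ENNReal.ofReal_eq_zero, not_le]
      linarith
    rw [hRHS, hLHS]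
end

section
/- Let μ be a nonnegative measure on ℝ^d with μ(ℝ^d) > 0 (and satisfying ∫ (1+‖ξ‖²)^{-1} μ(dξ) < ∞). Fix T > 0. Then there exists a constant C > 0, depending only on T and μ, such that for all 0 ≤ τ₁ < τ₂ ≤ T, C (τ₂ - τ₁) ≤ ∫_{τ₁}^{τ₂} ∫_{ℝ^d} exp(-2t‖ξ‖²) μ(dξ) dt. -/
open MeasureTheory Real

/-- Time-homogeneous lower bound: there is C > 0 with
C(τ₂ - τ₁) ≤ ∫_{τ₁}^{τ₂} ∫ exp(-2t‖ξ‖²) μ(dξ) dt for all 0 ≤ τ₁ < τ₂ ≤ T. -/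
theorem heat_variance_lower_bound (d : ℕ) (T : ℝ) (hT : 0 < T)
    (μ : Measure (EuclideanSpace ℝ (Fin d))) (hμ : μ ≠ 0)
    (hμint : (∫⁻ ξ, ENNReal.ofReal ((1 + ‖ξ‖ ^ 2)⁻¹) ∂μ) < ⊤) :
    ∃ C : ℝ, 0 < C ∧ ∀ τ₁ τ₂ : ℝ, 0 ≤ τ₁ → τ₁ < τ₂ → τ₂ ≤ T →
      ENNReal.ofReal (C * (τ₂ - τ₁)) ≤
        ∫⁻ t in Set.Ioc τ₁ τ₂,
          ∫⁻ ξ, ENNReal.ofReal (Real.exp (-2 * t * ‖ξ‖ ^ 2)) ∂μ := by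
  -- find a closed ball of positive measure
  obtain ⟨n, hn⟩ : ∃ n : ℕ, 0 < μ (Metric.closedBall 0 n) := by
    by_contra h
    push_neg at h
    simp only [le_zero_iff] at h
    apply hμ
    have huniv : μ Set.univ = 0 := by
      rw [← Metric.iUnion_closedBall_nat (0 : EuclideanSpace ℝ (Fin d))]
      exact measure_iUnion_null h
    exact Measure.measure_univ_eq_zero.mp huniv
  set B := Metric.closedBall (0 : EuclideanSpace ℝ (Fin d)) (n : ℝ) with hB
  -- B has finite measure
  have hBfin : μ B ≠ ⊤ := by
    intro htop
    have hle : ENNReal.ofReal ((1 + (n : ℝ) ^ 2)⁻¹) * μ B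
        ≤ ∫⁻ ξ, ENNReal.ofReal ((1 + ‖ξ‖ ^ 2)⁻¹) ∂μ := by
      calc ENNReal.ofReal ((1 + (n : ℝ) ^ 2)⁻¹) * μ B
          = ∫⁻ _ in B, ENNReal.ofReal ((1 + (n : ℝ) ^ 2)⁻¹) ∂μ := by
            rw [setLIntegral_const, mul_comm]
        _ ≤ ∫⁻ ξ in B, ENNReal.ofReal ((1 + ‖ξ‖ ^ 2)⁻¹) ∂μ := by
            apply setLIntegral_mono' Metric.isClosed_closedBall.measurableSet
            intro ξ hξ
            apply ENNReal.ofReal_le_ofReal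
            have hξn : ‖ξ‖ ≤ (n : ℝ) := by
              simpa [hB, mem_closedBall_zero_iff] using hξ
            have h1 : (0:ℝ) < 1 + ‖ξ‖ ^ 2 := by positivity
            apply inv_anti₀ h1
            have : ‖ξ‖ ^ 2 ≤ (n : ℝ) ^ 2 := by
              apply pow_le_pow_left₀ (norm_nonneg _) hξn
            linarith
        _ ≤ ∫⁻ ξ, ENNReal.ofReal ((1 + ‖ξ‖ ^ 2)⁻¹) ∂μ :=
            setLIntegral_le_lintegral _ _
    rw [htop, ENNReal.mul_top (by
      simp only [ne_eq, ENNReal.ofReal_eq_zero, not_le]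
      positivity)] at hle
    exact absurd (top_le_iff.mp hle) (by simpa using hμint.ne)
  have hBpos : 0 < (μ B).toReal := ENNReal.toReal_pos hn.ne' hBfin
  refine ⟨Real.exp (-2 * T * (n : ℝ) ^ 2) * (μ B).toReal,
    mul_pos (Real.exp_pos _) hBpos, ?_⟩
  intro τ₁ τ₂ h0 h12 h2T
  set c : ENNReal := ENNReal.ofReal (Real.exp (-2 * T * (n : ℝ) ^ 2)) with hc
  -- pointwise lower bound on inner integral
  have key : ∀ t ∈ Set.Ioc τ₁ τ₂,
      c * μ B ≤ ∫⁻ ξ, ENNReal.ofReal (Real.exp (-2 * t * ‖ξ‖ ^ 2)) ∂μ := by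
    intro t ht
    have ht0 : 0 ≤ t := le_of_lt (lt_of_le_of_lt h0 ht.1)
    have htT : t ≤ T := le_trans ht.2 h2T
    calc c * μ B = ∫⁻ _ in B, c ∂μ := by rw [setLIntegral_const, mul_comm]
      _ ≤ ∫⁻ ξ in B, ENNReal.ofReal (Real.exp (-2 * t * ‖ξ‖ ^ 2)) ∂μ := by
          apply setLIntegral_mono' Metric.isClosed_closedBall.measurableSet
          intro ξ hξ
          apply ENNReal.ofReal_le_ofReal
          apply Real.exp_le_exp.2
          have hξn : ‖ξ‖ ≤ (n : ℝ) := by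
            simpa [hB, mem_closedBall_zero_iff] using hξ
          have h1 : ‖ξ‖ ^ 2 ≤ (n : ℝ) ^ 2 := pow_le_pow_left₀ (norm_nonneg _) hξn _
          nlinarith [norm_nonneg ξ, sq_nonneg (‖ξ‖ : ℝ)]
      _ ≤ ∫⁻ ξ, ENNReal.ofReal (Real.exp (-2 * t * ‖ξ‖ ^ 2)) ∂μ :=
          setLIntegral_le_lintegral _ _
  calc ENNReal.ofReal (Real.exp (-2 * T * (n : ℝ) ^ 2) * (μ B).toReal * (τ₂ - τ₁))
      = c * μ B * ENNReal.ofReal (τ₂ - τ₁) := by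
        rw [ENNReal.ofReal_mul (by positivity), ENNReal.ofReal_mul (Real.exp_nonneg _),
          ENNReal.ofReal_toReal hBfin]
    _ = ∫⁻ _ in Set.Ioc τ₁ τ₂, c * μ B := by
        rw [setLIntegral_const, Real.volume_Ioc, mul_comm (c * μ B) _]
    _ ≤ ∫⁻ t in Set.Ioc τ₁ τ₂,
          ∫⁻ ξ, ENNReal.ofReal (Real.exp (-2 * t * ‖ξ‖ ^ 2)) ∂μ :=
        setLIntegral_mono' measurableSet_Ioc key
end

section
/- Let Φ : [0,T] → [0,∞) be nondecreasing with Φ(0)=0, and let J : (0,T] → [0,∞) be integrable with ∫_0^t J(s) ds = Φ(t). Let F : [e-δ, e] → [0,∞) be a bounded measurable function satisfying F(t) ≤ C₂ A + C₁ ∫_{e-δ}^t (A + F(s)) (J(t-s) + 1) ds for all t ∈ [e-δ, e], where A ≥ 0 and C₁, C₂ > 0. Then there exists a constant C, depending only on C₁, C₂, T and ∫_0^T J(s)ds, but not on A, δ or e, such that F(t) ≤ C A for all t ∈ [e-δ, e]. -/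
open MeasureTheory Real

lemma gron_shift (g : ℝ → ℝ) (T t a b : ℝ) (hab : a ≤ b) (hbt : b ≤ t)
    (haT : t - a ≤ T) (h0b : 0 ≤ t - b)
    (hgint : IntegrableOn g (Set.Ioc 0 T)) :
    IntegrableOn (fun s => g (t - s)) (Set.Ioc a b) ∧
      (∫ s in Set.Ioc a b, g (t - s)) = ∫ u in Set.Ioc (t - b) (t - a), g u := by
  have hsub : Set.Ioc (t - b) (t - a) ⊆ Set.Ioc 0 T := Set.Ioc_subset_Ioc h0b haT
  have hg : IntegrableOn g (Set.Ioc (t - b) (t - a)) := hgint.mono_set hsub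
  have hba : t - b ≤ t - a := by linarith
  have hgi : IntervalIntegrable g volume (t - b) (t - a) :=
    (intervalIntegrable_iff_integrableOn_Ioc_of_le hba).2 hg
  have hcomp := hgi.comp_sub_left t
  simp only [sub_sub_cancel] at hcomp
  have hcomp' : IntervalIntegrable (fun s => g (t - s)) volume a b := hcomp.symm
  constructor
  · exact (intervalIntegrable_iff_integrableOn_Ioc_of_le hab).1 hcomp'
  · rw [← intervalIntegral.integral_of_le hab, intervalIntegral.integral_comp_sub_left g t,
      intervalIntegral.integral_of_le hba]

def gronC (C₁ C₂ B : ℝ) : ℕ → ℝ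
  | 0 => C₂
  | (k+1) => 2*C₂ + 1 + 2*C₁*B*(1 + gronC C₁ C₂ B k)

set_option maxHeartbeats 1000000 in
/-- Gronwall-type lemma: if F(t) ≤ C₂A + C₁∫_{e-δ}^t (A + F(s))(J(t-s)+1) ds on [e-δ,e],
then F(t) ≤ C·A with C depending only on C₁, C₂, T and J (not on A, δ, e or F). -/
theorem gronwall_type_lemma (C₁ C₂ T : ℝ) (hC₁ : 0 < C₁) (hC₂ : 0 < C₂) (hT : 0 < T)
    (J : ℝ → ℝ) (hJnn : ∀ s ∈ Set.Ioc (0 : ℝ) T, 0 ≤ J s)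
    (hJint : IntegrableOn J (Set.Ioc 0 T)) :
    ∃ C : ℝ, 0 < C ∧
      ∀ (A δ e : ℝ) (F : ℝ → ℝ), 0 ≤ A → 0 < δ → δ ≤ e → e ≤ T →
        Measurable F →
        (∀ t ∈ Set.Icc (e - δ) e, 0 ≤ F t) →
        (∃ K : ℝ, ∀ t ∈ Set.Icc (e - δ) e, F t ≤ K) →
        (∀ t ∈ Set.Icc (e - δ) e,
          F t ≤ C₂ * A + C₁ * ∫ s in Set.Ioc (e - δ) t, (A + F s) * (J (t - s) + 1)) →
        ∀ t ∈ Set.Icc (e - δ) e, F t ≤ C * A := by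
  classical
  set g : ℝ → ℝ := fun u => J u + 1 with hgdef
  have hJ1int : IntegrableOn g (Set.Ioc 0 T) := by
    exact hJint.add (integrableOn_const measure_Ioc_lt_top.ne)
  have hJ1nn : ∀ u ∈ Set.Ioc (0:ℝ) T, 0 ≤ g u := fun u hu => by
    have := hJnn u hu; simp only [hgdef]; linarith
  set B : ℝ := ∫ u in Set.Ioc (0:ℝ) T, g u with hBdef
  have hB0 : 0 ≤ B := setIntegral_nonneg measurableSet_Ioc hJ1nn
  -- choose ε
  obtain ⟨ε, hε, hεT, hεsmall⟩ :
      ∃ ε : ℝ, 0 < ε ∧ ε ≤ T ∧ (∫ u in Set.Ioc (0:ℝ) ε, g u) < 1/(2*C₁) := by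
    have hanti : Antitone (fun n : ℕ => Set.Ioc (0:ℝ) (T/(n+1))) := by
      intro n m hnm
      apply Set.Ioc_subset_Ioc le_rfl
      apply div_le_div_of_nonneg_left hT.le (by positivity)
      exact_mod_cast by omega
    have hinter : (⋂ n : ℕ, Set.Ioc (0:ℝ) (T/(n+1))) = ∅ := by
      rw [Set.eq_empty_iff_forall_notMem]
      intro x hx
      simp only [Set.mem_iInter, Set.mem_Ioc] at hx
      obtain ⟨hx0, _⟩ := hx 0
      obtain ⟨n, hn⟩ := exists_nat_gt (T / x)
      have h1 : T / x < (n:ℝ) + 1 := by linarith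
      have h2 : T < x * ((n:ℝ)+1) := by
        have := (div_lt_iff₀ hx0).1 h1; linarith
      have h3 : T / ((n:ℝ)+1) < x := by
        rw [div_lt_iff₀ (by positivity)]; linarith
      exact absurd (hx n).2 (not_le.2 h3)
    have htend := tendsto_setIntegral_of_antitone (f := g) (μ := volume)
      (fun n : ℕ => measurableSet_Ioc) hanti
      ⟨0, by simpa using hJ1int⟩
    rw [hinter] at htend
    simp only [Measure.restrict_empty, integral_zero_measure] at htend
    have hev := htend.eventually_lt_const (by positivity : (0:ℝ) < 1/(2*C₁))
    obtain ⟨n, hn⟩ := hev.exists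
    exact ⟨T/(n+1), by positivity, by
      rw [div_le_iff₀ (by positivity)]; nlinarith [Nat.cast_nonneg (α := ℝ) n], hn⟩
  have hmono : ∀ r : ℝ, r ≤ ε → (∫ u in Set.Ioc (0:ℝ) r, g u) ≤ 1/(2*C₁) := by
    intro r hr
    refine le_trans (setIntegral_mono_set (hJ1int.mono_set (Set.Ioc_subset_Ioc le_rfl hεT))
      ?_ (HasSubset.Subset.eventuallyLE (Set.Ioc_subset_Ioc le_rfl hr))) hεsmall.le
    exact ae_restrict_of_forall_mem measurableSet_Ioc
      (fun u hu => hJ1nn u (Set.Ioc_subset_Ioc le_rfl hεT hu))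
  have hIB : ∀ a b : ℝ, 0 ≤ a → b ≤ T → (∫ u in Set.Ioc a b, g u) ≤ B := by
    intro a b ha hb
    exact setIntegral_mono_set hJ1int
      (ae_restrict_of_forall_mem measurableSet_Ioc hJ1nn)
      (HasSubset.Subset.eventuallyLE (Set.Ioc_subset_Ioc ha hb))
  -- the constants
  set c : ℕ → ℝ := gronC C₁ C₂ B with hcdef
  have hc0 : c 0 = C₂ := rfl
  have hcs : ∀ k, c (k+1) = 2*C₂ + 1 + 2*C₁*B*(1+c k) := fun k => rfl
  have hcpos : ∀ k, 0 < c k := by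
    intro k
    induction k with
    | zero => exact hC₂
    | succ k ih =>
      rw [hcs]
      have h1 : 0 ≤ 2*C₁*B := mul_nonneg (by positivity) hB0
      nlinarith
  set N : ℕ := ⌈T/ε⌉₊ with hNdef
  refine ⟨c N, hcpos N, ?_⟩
  intro A δ e F hA hδ hδe heT hFmeas hFnn hKex hF
  obtain ⟨K, hK⟩ := hKex
  have heδ0 : 0 ≤ e - δ := by linarith
  have key : ∀ k : ℕ, ∀ t ∈ Set.Icc (e-δ) e, t ≤ e - δ + k*ε → F t ≤ c k * A := by
    intro k
    induction k with
    | zero =>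
      intro t ht htle
      have : t = e - δ := le_antisymm (by simpa using htle) ht.1
      have h0 := hF t ht
      rw [this] at h0 ⊢
      simp only [Set.Ioc_self, Measure.restrict_empty, integral_zero_measure, mul_zero,
        add_zero] at h0
      rw [hc0]; exact h0
    | succ k ih =>
      set b : ℝ := min e (e - δ + (k+1)*ε) with hbdef
      have hebb : e - δ ≤ b := le_min (by linarith) (by nlinarith [Nat.cast_nonneg (α := ℝ) k])
      have hSsub : Set.Icc (e-δ) b ⊆ Set.Icc (e-δ) e := Set.Icc_subset_Icc_right (min_le_left _ _)
      have hmem0 : (e - δ) ∈ Set.Icc (e-δ) b := ⟨le_refl _, hebb⟩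
      have hne : (F '' Set.Icc (e-δ) b).Nonempty := ⟨F (e-δ), ⟨e-δ, hmem0, rfl⟩⟩
      have hbdd : BddAbove (F '' Set.Icc (e-δ) b) :=
        ⟨K, fun y ⟨s, hs, hys⟩ => hys ▸ hK s (hSsub hs)⟩
      set M := sSup (F '' Set.Icc (e-δ) b) with hMdef
      have hFM : ∀ s ∈ Set.Icc (e-δ) b, F s ≤ M := fun s hs => le_csSup hbdd ⟨s, hs, rfl⟩
      have hM0 : 0 ≤ M := le_trans (hFnn _ (hSsub hmem0)) (hFM _ hmem0)
      have claim : ∀ t ∈ Set.Icc (e-δ) b, F t ≤ (C₂ + C₁*B*(1+c k))*A + (A+M)/2 := by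
        intro t ht
        have htIcc : t ∈ Set.Icc (e-δ) e := hSsub ht
        have h0 := hF t htIcc
        set m : ℝ := max (e-δ) (t - ε) with hmdef
        have hm1 : e - δ ≤ m := le_max_left _ _
        have hm2 : m ≤ t := max_le ht.1 (by linarith)
        have htT : t - (e-δ) ≤ T := by have := htIcc.2; linarith
        have htm : t - m ≤ ε := by
          have := le_max_right (e-δ) (t - ε); linarith
        obtain ⟨hint1, heq1⟩ := gron_shift g T t (e-δ) m hm1 hm2 htT (by linarith) hJ1int
        obtain ⟨hint2, heq2⟩ := gron_shift g T t m t hm2 le_rfl (by linarith) (by linarith) hJ1int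
        -- integrability of the full integrand
        have hgbig : IntegrableOn (fun s => g (t - s)) (Set.Ioc (e-δ) t) :=
          (gron_shift g T t (e-δ) t (le_trans hm1 hm2) le_rfl htT (by linarith) hJ1int).1
        have hg_int : IntegrableOn (fun s => (A + F s) * (J (t-s) + 1)) (Set.Ioc (e-δ) t) := by
          have : IntegrableOn (fun s => (A + F s) * g (t-s)) (Set.Ioc (e-δ) t) := by
            apply Integrable.bdd_mul (c := A + max K 0) hgbig
              ((measurable_const.add hFmeas).aestronglyMeasurable)
            refine ae_restrict_of_forall_mem measurableSet_Ioc (fun s hs => ?_)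
            have hsIcc : s ∈ Set.Icc (e-δ) e := ⟨hs.1.le, le_trans hs.2 htIcc.2⟩
            have h1 := hFnn s hsIcc
            have h2 := hK s hsIcc
            simp only [Pi.add_apply]
            rw [Real.norm_eq_abs, abs_of_nonneg (by linarith)]
            have : F s ≤ max K 0 := le_trans h2 (le_max_left _ _)
            linarith
          exact this
        have hg1 : IntegrableOn (fun s => (A + F s) * (J (t-s) + 1)) (Set.Ioc (e-δ) m) :=
          hg_int.mono_set (Set.Ioc_subset_Ioc le_rfl hm2)
        have hg2 : IntegrableOn (fun s => (A + F s) * (J (t-s) + 1)) (Set.Ioc m t) :=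
          hg_int.mono_set (Set.Ioc_subset_Ioc hm1 le_rfl)
        have hsplit : (∫ s in Set.Ioc (e-δ) t, (A + F s) * (J (t-s) + 1))
            = (∫ s in Set.Ioc (e-δ) m, (A + F s) * (J (t-s) + 1))
              + ∫ s in Set.Ioc m t, (A + F s) * (J (t-s) + 1) := by
          rw [← setIntegral_union (Set.Ioc_disjoint_Ioc_of_le le_rfl) measurableSet_Ioc hg1 hg2,
            Set.Ioc_union_Ioc_eq_Ioc hm1 hm2]
        have hI1 : (∫ s in Set.Ioc (e-δ) m, (A + F s) * (J (t-s) + 1)) ≤ (1 + c k)*A*B := by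
          have hpt : ∀ s ∈ Set.Ioc (e-δ) m, (A + F s) * (J (t-s) + 1) ≤ ((1+c k)*A) * g (t-s) := by
            intro s hs
            have hm' : e - δ < m := lt_of_lt_of_le hs.1 hs.2
            have hmte : m = t - ε := by
              rcases max_choice (e-δ) (t-ε) with h1 | h1
              · rw [hmdef, h1] at hm'; exact absurd hm' (lt_irrefl _)
              · rw [hmdef, h1]
            have hsle : s ≤ t - ε := hmte ▸ hs.2
            have hsIcc : s ∈ Set.Icc (e-δ) e := ⟨hs.1.le, by linarith [htIcc.2, hε]⟩
            have hsk : s ≤ e - δ + k*ε := by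
              have hb2 : t ≤ e - δ + (k+1)*ε := le_trans ht.2 (min_le_right _ _)
              push_cast at hb2 ⊢
              nlinarith
            have hFs := ih s hsIcc hsk
            have hse : e - δ < s := hs.1
            have hJs : 0 ≤ J (t - s) := hJnn _ ⟨by linarith, by linarith⟩
            have hg0 : 0 ≤ g (t - s) := by simp only [hgdef]; linarith
            have hAF : A + F s ≤ (1 + c k) * A := by nlinarith
            calc (A + F s) * (J (t-s) + 1) = (A + F s) * g (t - s) := rfl
              _ ≤ ((1+c k)*A) * g (t-s) := mul_le_mul_of_nonneg_right hAF hg0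
          calc (∫ s in Set.Ioc (e-δ) m, (A + F s) * (J (t-s) + 1))
              ≤ ∫ s in Set.Ioc (e-δ) m, ((1+c k)*A) * g (t-s) :=
                setIntegral_mono_on hg1 (hint1.const_mul _) measurableSet_Ioc hpt
            _ = ((1+c k)*A) * ∫ s in Set.Ioc (e-δ) m, g (t-s) := integral_const_mul _ _
            _ = ((1+c k)*A) * ∫ u in Set.Ioc (t-m) (t-(e-δ)), g u := by rw [heq1]
            _ ≤ ((1+c k)*A) * B := by
                apply mul_le_mul_of_nonneg_left (hIB _ _ (by linarith) htT)
                have := hcpos k; positivity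
            _ = (1 + c k)*A*B := by ring
        have hI2 : (∫ s in Set.Ioc m t, (A + F s) * (J (t-s) + 1)) ≤ (A+M) * (1/(2*C₁)) := by
          have hae : ∀ᵐ s ∂(volume.restrict (Set.Ioc m t)),
              (A + F s) * (J (t-s) + 1) ≤ (A+M) * g (t-s) := by
            have hnet : ∀ᵐ s : ℝ ∂volume, s ≠ t := by
              rw [ae_iff]
              have : {a : ℝ | ¬ a ≠ t} = {t} := by ext x; simp
              rw [this]; exact Real.volume_singleton
            filter_upwards [ae_restrict_mem measurableSet_Ioc, ae_restrict_of_ae hnet]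
              with s hs hst
            have hslt : s < t := lt_of_le_of_ne hs.2 hst
            have hJs : 0 ≤ J (t - s) := hJnn _ ⟨by linarith, by
              have := hs.1; linarith [htm, hεT]⟩
            have hg0 : 0 ≤ g (t - s) := by simp only [hgdef]; linarith
            have hsS : s ∈ Set.Icc (e-δ) b := ⟨by linarith [hs.1, hm1], le_trans hs.2 ht.2⟩
            have hFs := hFM s hsS
            calc (A + F s) * (J (t-s) + 1) = (A + F s) * g (t - s) := rfl
              _ ≤ (A+M) * g (t-s) := mul_le_mul_of_nonneg_right (by linarith) hg0
          calc (∫ s in Set.Ioc m t, (A + F s) * (J (t-s) + 1))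
              ≤ ∫ s in Set.Ioc m t, (A+M) * g (t-s) :=
                integral_mono_ae hg2 (hint2.const_mul _) hae
            _ = (A+M) * ∫ s in Set.Ioc m t, g (t-s) := integral_const_mul _ _
            _ = (A+M) * ∫ u in Set.Ioc (t-t) (t-m), g u := by rw [heq2]
            _ ≤ (A+M) * (1/(2*C₁)) := by
                apply mul_le_mul_of_nonneg_left _ (by linarith)
                rw [sub_self]
                exact hmono _ htm
        have hcomb : C₁ * ((1 + c k)*A*B + (A+M)*(1/(2*C₁)))
            = C₁*B*(1+c k)*A + (A+M)/2 := by field_simp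
        have hfin : F t ≤ C₂*A + C₁*((1 + c k)*A*B + (A+M)*(1/(2*C₁))) := by
          refine le_trans h0 ?_
          rw [hsplit]
          have := add_le_add hI1 hI2
          nlinarith
        rw [hcomb] at hfin
        linarith
      have hMle : M ≤ (C₂ + C₁*B*(1+c k))*A + (A+M)/2 := by
        apply csSup_le hne
        rintro y ⟨s, hs, rfl⟩
        exact claim s hs
      intro t ht htle
      have htle' : t ≤ e - δ + (k+1)*ε := by push_cast at htle; linarith
      have htS : t ∈ Set.Icc (e-δ) b := ⟨ht.1, le_min ht.2 htle'⟩
      have hFt := hFM t htS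
      have hexp : c (k+1) * A = 2*((C₂ + C₁*B*(1+c k))*A) + A := by rw [hcs]; ring
      linarith
  intro t ht
  have hNε : T ≤ N*ε := by
    have h := Nat.le_ceil (T/ε)
    rw [div_le_iff₀ hε] at h
    exact h
  exact key N t ht (by have := ht.2; linarith)
end
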